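/- arXiv:2411.19373 — 4 statements merged into one kernel-verified Lean document; each statement's English description precedes it below -/
import Mathlib

section
/- A move in Paintbucket on a connected bipartite graph preserves connectedness and bipartiteness of the resulting graph. -/
/-- A Paintbucket position: a colored graph on vertex type `V`, with a finite
set of live vertices, a coloring (`true` = black), and a boolean adjacency. -/
structure PB (V : Type) where
  verts : Finset V
  black : V → Bool
  adj : V → V → Bool

namespace PB

variable {V : Type} [DecidableEq V]

/-- The neighbors of `v` among the live vertices. -/
def nbrs (P : PB V) (v : V) : Finset V :=
  P.verts.filter fun w => P.adj v w = true

/-- The move of player `p` (`true` = Black) at vertex `v`: delete the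
neighbors of `v`, recolor `v` with the mover's color, and connect `v` to all
former neighbors of the deleted vertices. -/
def move (p : Bool) (P : PB V) (v : V) : PB V :=
  let del := P.nbrs v
  let vs := insert v (P.verts \ del)
  { verts := vs
    black := fun x => if x = v then p else P.black x
    adj := fun x y =>
      decide (x ∈ vs) && decide (y ∈ vs) && decide (x ≠ y) &&
        (if x = v then P.adj v y || decide (∃ w ∈ del, P.adj w y = true)
         else if y = v then P.adj v x || decide (∃ w ∈ del, P.adj w x = true)
         else P.adj x y) }

/-- Player `p` may move at `v` iff the game is not over (at least two vertices
remain), `v` is live, and `v` has the opponent's color. -/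
def legal (p : Bool) (P : PB V) (v : V) : Prop :=
  1 < P.verts.card ∧ v ∈ P.verts ∧ P.black v = !p

instance (p : Bool) (P : PB V) (v : V) : Decidable (legal p P v) := by
  unfold legal; infer_instance

/-- `blackWinsAux n p P`: with fuel `n` and player `p` to move, Black wins
with optimal play. When the game is over, Black wins iff the remaining vertex
is black. -/
def blackWinsAux : ℕ → Bool → PB V → Prop
  | 0, _, P => ∃ v ∈ P.verts, P.black v = true
  | n + 1, p, P =>
    if P.verts.card ≤ 1 then ∃ v ∈ P.verts, P.black v = true
    else if p then ∃ v, legal true P v ∧ blackWinsAux n false (move true P v)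
    else ∀ v, legal false P v → blackWinsAux n true (move false P v)

/-- Black wins with `p` to move (fuel `P.verts.card` suffices since every move
in a connected position removes at least one vertex). -/
def blackWins (p : Bool) (P : PB V) : Prop :=
  blackWinsAux P.verts.card p P

/-- The coloring is proper: edges join vertices of different colors. -/
def Bipartite (P : PB V) : Prop :=
  ∀ x y, P.adj x y = true → P.black x ≠ P.black y

/-- Any two live vertices are joined by a path. -/
def Connected (P : PB V) : Prop :=
  ∀ x ∈ P.verts, ∀ y ∈ P.verts,
    Relation.ReflTransGen (fun a b => P.adj a b = true) x y

/-- A valid Paintbucket position: symmetric irreflexive adjacency supported on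
the live vertices, properly two-colored, and connected. -/
def Valid (P : PB V) : Prop :=
  (∀ x y, P.adj x y = P.adj y x) ∧
  (∀ x, P.adj x x = false) ∧
  (∀ x y, P.adj x y = true → x ∈ P.verts ∧ y ∈ P.verts) ∧
  P.Bipartite ∧ P.Connected

/-- Isomorphism of colored positions. -/
def Isom {W : Type} (P : PB V) (Q : PB W) : Prop :=
  ∃ f : V → W, Set.BijOn f ↑P.verts ↑Q.verts ∧
    (∀ x ∈ P.verts, Q.black (f x) = P.black x) ∧
    ∀ x ∈ P.verts, ∀ y ∈ P.verts, Q.adj (f x) (f y) = P.adj x y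

/-- Play out a list of (player, vertex) moves. -/
def run (P : PB V) : List (Bool × V) → PB V
  | [] => P
  | m :: ms => run (move m.1 P m.2) ms

/-- All moves in the list are legal when played in order. -/
def legalRun (P : PB V) : List (Bool × V) → Prop
  | [] => True
  | m :: ms => legal m.1 P m.2 ∧ legalRun (move m.1 P m.2) ms

end PB

/-! The deleted vertices are exactly the neighbours of `v`, which all carry the mover's colour `p`;
every new edge joins `v` (now of colour `p`) to a neighbour of a deleted vertex, which has colour
`!p`, so the colouring stays proper. A path in the old graph from a surviving vertex to `v`
survives up to its first deleted vertex, whose predecessor is now adjacent to `v`; hence every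
surviving vertex still reaches `v`. -/

namespace PB

variable {V : Type} [DecidableEq V]

omit [DecidableEq V] in
lemma mem_nbrs {P : PB V} {v w : V} : w ∈ P.nbrs v ↔ w ∈ P.verts ∧ P.adj v w = true := by
  simp [nbrs]

omit [DecidableEq V] in
lemma Bipartite.black_eq_not {P : PB V} (h : P.Bipartite) {x y : V} (hxy : P.adj x y = true) :
    P.black y = !P.black x := by
  have := h x y hxy
  revert this
  cases P.black x <;> cases P.black y <;> simp

omit [DecidableEq V] in
lemma connected_of_forall_reflTransGen {P : PB V} (hsymm : ∀ x y, P.adj x y = P.adj y x) (c : V)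
    (h : ∀ x ∈ P.verts, Relation.ReflTransGen (fun a b => P.adj a b = true) x c) :
    P.Connected := by
  have : Std.Symm fun a b => P.adj a b = true := ⟨fun a b hab => hsymm a b ▸ hab⟩
  exact fun x hx y hy => (h x hx).trans (Std.Symm.symm _ _ (h y hy))

section Move

variable (p : Bool) (P : PB V) (v : V)

lemma mem_move_verts {x : V} :
    x ∈ (move p P v).verts ↔ x = v ∨ x ∈ P.verts ∧ x ∉ P.nbrs v := by
  simp [move]

lemma move_black (x : V) : (move p P v).black x = if x = v then p else P.black x := rfl

lemma move_adj_eq_true_iff (x y : V) :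
    (move p P v).adj x y = true ↔
      x ∈ (move p P v).verts ∧ y ∈ (move p P v).verts ∧ x ≠ y ∧
      (if x = v then P.adj v y = true ∨ ∃ w ∈ P.nbrs v, P.adj w y = true
       else if y = v then P.adj v x = true ∨ ∃ w ∈ P.nbrs v, P.adj w x = true
       else P.adj x y = true) := by
  simp only [move, Bool.and_eq_true, decide_eq_true_eq, and_assoc]
  refine and_congr_right fun _ => and_congr_right fun _ => and_congr_right fun _ => ?_
  split_ifs <;> simp [Bool.or_eq_true]

variable {p P v}

lemma mem_move_verts_of_move_adj {x y : V} (h : (move p P v).adj x y = true) :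
    x ∈ (move p P v).verts ∧ y ∈ (move p P v).verts :=
  have h := (move_adj_eq_true_iff p P v x y).1 h
  ⟨h.1, h.2.1⟩

variable (p P v) in
lemma move_adj_self (x : V) : (move p P v).adj x x = false := by
  by_contra h
  exact ((move_adj_eq_true_iff p P v x x).1 (by simpa using h)).2.2.1 rfl

lemma move_adj_comm (hsymm : ∀ x y, P.adj x y = P.adj y x) (x y : V) :
    (move p P v).adj x y = (move p P v).adj y x := by
  rw [Bool.eq_iff_iff, move_adj_eq_true_iff, move_adj_eq_true_iff]
  by_cases hx : x = v <;> by_cases hy : y = v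
  · subst hx hy; rfl
  all_goals simp only [hx, hy, if_true, if_false, hsymm x y, ne_comm (a := x)]; tauto

lemma adj_of_move_adj_of_ne {x y : V} (hx : x ≠ v) (hy : y ≠ v)
    (h : (move p P v).adj x y = true) : P.adj x y = true := by
  simpa [hx, hy] using ((move_adj_eq_true_iff p P v x y).1 h).2.2.2

lemma move_adj_of_adj {x y : V} (hirr : ∀ x, P.adj x x = false) (hx : x ≠ v) (hy : y ≠ v)
    (hxQ : x ∈ (move p P v).verts) (hyQ : y ∈ (move p P v).verts) (h : P.adj x y = true) :
    (move p P v).adj x y = true := by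
  refine (move_adj_eq_true_iff p P v x y).2 ⟨hxQ, hyQ, ?_, by simpa [hx, hy] using h⟩
  rintro rfl
  simp [hirr] at h

lemma move_adj_of_adj_nbr {x w : V} (hsymm : ∀ x y, P.adj x y = P.adj y x) (hx : x ≠ v)
    (hxQ : x ∈ (move p P v).verts) (hw : w ∈ P.nbrs v) (h : P.adj x w = true) :
    (move p P v).adj x v = true :=
  (move_adj_eq_true_iff p P v x v).2
    ⟨hxQ, (mem_move_verts p P v).2 (.inl rfl), hx,
      by simpa [hx] using .inr ⟨w, hw, hsymm x w ▸ h⟩⟩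

lemma exists_nbr_adj_of_move_adj {y : V}
    (hsupp : ∀ x y, P.adj x y = true → x ∈ P.verts ∧ y ∈ P.verts) (hy : y ≠ v)
    (h : (move p P v).adj v y = true) : ∃ w ∈ P.nbrs v, P.adj w y = true := by
  obtain ⟨-, hyQ, -, hcond⟩ := (move_adj_eq_true_iff p P v v y).1 h
  have hyN : y ∉ P.nbrs v := ((mem_move_verts p P v).1 hyQ).resolve_left hy |>.2
  simp only [if_true] at hcond
  exact hcond.resolve_left fun hvy => hyN (mem_nbrs.2 ⟨(hsupp v y hvy).2, hvy⟩)

lemma move_bipartite (hsymm : ∀ x y, P.adj x y = P.adj y x)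
    (hsupp : ∀ x y, P.adj x y = true → x ∈ P.verts ∧ y ∈ P.verts) (hbip : P.Bipartite)
    (hvcol : P.black v = !p) : (move p P v).Bipartite := by
  have hcenter : ∀ y, y ≠ v → (move p P v).adj v y = true →
      (move p P v).black v ≠ (move p P v).black y := by
    intro y hy h
    obtain ⟨w, hw, hwy⟩ := exists_nbr_adj_of_move_adj hsupp hy h
    have hwcol : P.black w = p := by
      simpa [hvcol] using hbip.black_eq_not (mem_nbrs.1 hw).2
    simp [move_black, hy, hbip.black_eq_not hwy, hwcol]
  intro x y h
  by_cases hx : x = v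
  · subst hx
    exact hcenter y (fun hy => by simp [hy, move_adj_self] at h) h
  by_cases hy : y = v
  · subst hy
    exact (hcenter x hx (move_adj_comm hsymm x y ▸ h)).symm
  simpa [move_black, hx, hy] using hbip x y (adj_of_move_adj_of_ne hx hy h)

lemma move_reflTransGen_of_reflTransGen (hsymm : ∀ x y, P.adj x y = P.adj y x)
    (hirr : ∀ x, P.adj x x = false)
    (hsupp : ∀ x y, P.adj x y = true → x ∈ P.verts ∧ y ∈ P.verts) {x : V}
    (hpath : Relation.ReflTransGen (fun a b => P.adj a b = true) x v)
    (hx : x ∈ (move p P v).verts) :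
    Relation.ReflTransGen (fun a b => (move p P v).adj a b = true) x v := by
  induction hpath using Relation.ReflTransGen.head_induction_on with
  | refl => exact .refl
  | @head a b hab _ ih =>
    by_cases hav : a = v
    · exact hav ▸ .refl
    have haN : a ∉ P.nbrs v := ((mem_move_verts p P v).1 hx).resolve_left hav |>.2
    by_cases hbN : b ∈ P.nbrs v
    · exact .single (move_adj_of_adj_nbr hsymm hav hx hbN hab)
    have hbv : b ≠ v := by
      rintro rfl
      exact haN (mem_nbrs.2 ⟨(hsupp a b hab).1, hsymm a b ▸ hab⟩)
    have hbQ : b ∈ (move p P v).verts :=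
      (mem_move_verts p P v).2 (.inr ⟨(hsupp a b hab).2, hbN⟩)
    exact .head (move_adj_of_adj hirr hav hbv hx hbQ hab) (ih hbQ)

lemma move_connected (hsymm : ∀ x y, P.adj x y = P.adj y x) (hirr : ∀ x, P.adj x x = false)
    (hsupp : ∀ x y, P.adj x y = true → x ∈ P.verts ∧ y ∈ P.verts) (hconn : P.Connected)
    (hv : v ∈ P.verts) : (move p P v).Connected := by
  refine connected_of_forall_reflTransGen (move_adj_comm hsymm) v fun x hx => ?_
  rcases (mem_move_verts p P v).1 hx with rfl | ⟨hxP, -⟩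
  · exact .refl
  · exact move_reflTransGen_of_reflTransGen hsymm hirr hsupp (hconn x hxP v hv) hx

end Move

end PB

open PB in
/-- a Paintbucket move preserves validity, i.e. the resulting
position is again a connected, properly two-colored (bipartite) graph. -/
theorem paintbucket_move_preserves_valid
    {V : Type} [DecidableEq V] (P : PB V) (p : Bool) (v : V)
    (hP : P.Valid) (hv : legal p P v) :
    (move p P v).Valid := by
  obtain ⟨hsymm, hirr, hsupp, hbip, hconn⟩ := hP
  obtain ⟨-, hvP, hvcol⟩ := hv
  exact ⟨move_adj_comm hsymm, move_adj_self p P v, fun _ _ => mem_move_verts_of_move_adj,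
    move_bipartite hsymm hsupp hbip hvcol, move_connected hsymm hirr hsupp hconn hvP⟩
end

section
/- (Neighbors lemma) In Paintbucket on a bipartite graph, suppose black vertices v_1, …, v_n all have exactly the same set of neighbors u_1, …, u_k. If White moves at v_1, then in the resulting graph each of v_2, …, v_n is a leaf, and all of them have the same single neighbor (the merged vertex resulting from contracting v_1 with u_1, …, u_k). -/
open PB in
/-- neighbors lemma: if the black vertices in `S` all have
exactly the same neighbors and White moves at `v₁ ∈ S`, then in the resulting
position every other vertex of `S` is a leaf, and they all have the merged
vertex (represented by `v₁`) as their unique common neighbor. -/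
theorem paintbucket_neighbors_lemma
    {V : Type} [DecidableEq V] (P : PB V) (hP : P.Valid)
    (S : Finset V) (hSsub : S ⊆ P.verts)
    (hSblack : ∀ x ∈ S, P.black x = true)
    (v₁ : V) (hv₁ : v₁ ∈ S)
    (hsame : ∀ x ∈ S, ∀ y, P.adj x y = P.adj v₁ y) :
    ∀ x ∈ S, x ≠ v₁ →
      x ∈ (move false P v₁).verts ∧ (move false P v₁).nbrs x = {v₁} := by
  obtain ⟨hsym, hirr, hsupp, hbip, hconn⟩ := hP
  intro x hx hxne
  have hxV : x ∈ P.verts := hSsub hx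
  have hv₁V : v₁ ∈ P.verts := hSsub hv₁
  have hv₁x : P.adj v₁ x = false := (hsame x hx x).symm.trans (hirr x)
  have hxdel : x ∉ P.nbrs v₁ := by simp [nbrs, hv₁x]
  have hxmem : x ∈ (move false P v₁).verts := by
    simp only [move, Finset.mem_insert, Finset.mem_sdiff]
    exact Or.inr ⟨hxV, hxdel⟩
  refine ⟨hxmem, ?_⟩
  have hpath := hconn x hxV v₁ hv₁V
  obtain ⟨w, hxw, -⟩ : ∃ w, P.adj x w = true ∧
      Relation.ReflTransGen (fun a b => P.adj a b = true) w v₁ := by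
    rcases hpath.cases_head with h | h
    · exact absurd h hxne
    · exact h
  have hv₁w : P.adj v₁ w = true := (hsame x hx w).symm.trans hxw
  have hwV : w ∈ P.verts := (hsupp _ _ hxw).2
  have hwdel : w ∈ P.nbrs v₁ := by simp [nbrs, hwV, hv₁w]
  have hwx : P.adj w x = true := (hsym w x).trans hxw
  have hxvs : x ∈ insert v₁ (P.verts \ P.nbrs v₁) :=
    Finset.mem_insert_of_mem (Finset.mem_sdiff.mpr ⟨hxV, hxdel⟩)
  ext y
  simp only [Finset.mem_singleton, nbrs, Finset.mem_filter]
  constructor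
  · rintro ⟨hyV, hadj⟩
    by_contra hne
    simp only [move, Bool.and_eq_true, decide_eq_true_eq, if_neg hxne,
      if_neg hne] at hadj
    obtain ⟨⟨⟨-, hyvs⟩, -⟩, hPxy⟩ := hadj
    have hv₁y : P.adj v₁ y = true := (hsame x hx y).symm.trans hPxy
    have : y ∈ P.nbrs v₁ := by
      simp [nbrs, (hsupp _ _ hv₁y).2, hv₁y]
    rcases Finset.mem_insert.mp hyvs with h | h
    · exact hne h
    · exact (Finset.mem_sdiff.mp h).2 this
  · rintro rfl
    refine ⟨Finset.mem_insert_self _ _, ?_⟩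
    simp only [move, Bool.and_eq_true, decide_eq_true_eq, if_neg hxne, if_pos rfl]
    refine ⟨⟨⟨hxvs, Finset.mem_insert_self _ _⟩, hxne⟩, ?_⟩
    rw [if_pos trivial, Bool.or_eq_true, decide_eq_true_eq]
    exact Or.inr ⟨w, hwdel, hwx⟩
end

section
/- (Parity normalization, enforcer-first) Let (C, A) be an avoider-enforcer position with the enforcer to move. Form (C ∪ {c}, A) for a fresh cell c belonging to no avoider set, with the avoider to move first. Then the avoider wins (C, A) with the enforcer moving first if and only if the avoider wins (C ∪ {c}, A) moving first. -/
/-- `avWins n turn C A`: the avoider wins the avoider-enforcer game `(C, A)`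
with fuel `n`, where `turn = true` means the avoider is to move. The avoider's
move at `c` removes `c` from `C` and from all avoider sets; the enforcer's
move at `c` removes `c` from `C` and discards all avoider sets containing `c`;
when `C = ∅`, the avoider wins iff no avoider set remains. -/
def avWins {α : Type} [DecidableEq α] : ℕ → Bool → Finset α → Finset (Finset α) → Prop
  | 0, _, _, A => A = ∅
  | n + 1, turn, C, A =>
    if C = ∅ then A = ∅
    else if turn then
      ∃ c ∈ C, avWins n false (C.erase c) (A.image fun s => s.erase c)
    else
      ∀ c ∈ C, avWins n true (C.erase c) (A.filter fun s => c ∉ s)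

/-- The avoider wins `(C, A)` with `turn` to move (`true` = avoider). -/
def AvoiderWins {α : Type} [DecidableEq α] (turn : Bool) (C : Finset α)
    (A : Finset (Finset α)) : Prop :=
  avWins C.card turn C A


section AvoiderEnforcerAux

variable {α : Type} [DecidableEq α]

private lemma avWins_mono : ∀ (n : ℕ) (t : Bool) (C : Finset α) (A A' : Finset (Finset α)),
    A' ⊆ A → avWins n t C A → avWins n t C A' := by
  intro n
  induction n with
  | zero =>
    intro t C A A' hsub h
    simp only [avWins] at h ⊢
    subst h
    exact Finset.subset_empty.mp hsub
  | succ n IH =>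
    intro t C A A' hsub h
    simp only [avWins] at h ⊢
    split_ifs at h ⊢ with h1 h2
    · subst h; exact Finset.subset_empty.mp hsub
    · obtain ⟨d, hd, hw⟩ := h
      exact ⟨d, hd, IH _ _ _ _ (Finset.image_subset_image hsub) hw⟩
    · intro d hd
      exact IH _ _ _ _ (Finset.filter_subset_filter _ hsub) (h d hd)

private lemma image_erase_of_forall_notMem (A : Finset (Finset α)) (c : α)
    (h : ∀ s ∈ A, c ∉ s) : (A.image fun s => s.erase c) = A := by
  ext s
  simp only [Finset.mem_image]
  constructor
  · rintro ⟨u, hu, rfl⟩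
    rwa [Finset.erase_eq_of_notMem (h u hu)]
  · intro hs
    exact ⟨s, hs, Finset.erase_eq_of_notMem (h s hs)⟩

private lemma filter_notMem_of_forall (A : Finset (Finset α)) (c : α)
    (h : ∀ s ∈ A, c ∉ s) : (A.filter fun s => c ∉ s) = A :=
  Finset.filter_true_of_mem h

private lemma filter_subset_image_erase (A : Finset (Finset α)) (d : α) :
    (A.filter fun s => d ∉ s) ⊆ A.image fun s => s.erase d := by
  intro s hs
  rw [Finset.mem_filter] at hs
  exact Finset.mem_image.mpr ⟨s, hs.1, Finset.erase_eq_of_notMem hs.2⟩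

private lemma filter_image_comm (A : Finset (Finset α)) (d e : α) (hed : e ≠ d) :
    ((A.filter fun s => e ∉ s).image fun s => s.erase d)
      = ((A.image fun s => s.erase d).filter fun s => e ∉ s) := by
  rw [Finset.filter_image]
  congr 1
  apply Finset.filter_congr
  intro s _
  simp [Finset.mem_erase, hed]

private lemma avWins_succ_true (n : ℕ) (C : Finset α) (A : Finset (Finset α))
    (hC : C ≠ ∅) :
    avWins (n + 1) true C A
      ↔ ∃ d ∈ C, avWins n false (C.erase d) (A.image fun s => s.erase d) := by
  simp [avWins, hC]

private lemma avWins_succ_false (n : ℕ) (C : Finset α) (A : Finset (Finset α))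
    (hC : C ≠ ∅) :
    avWins (n + 1) false C A
      ↔ ∀ d ∈ C, avWins n true (C.erase d) (A.filter fun s => d ∉ s) := by
  simp [avWins, hC]

private lemma avWins_dummy : ∀ (n : ℕ) (C : Finset α) (A : Finset (Finset α)) (c : α)
    (t : Bool), C.card = n → c ∉ C → (∀ s ∈ A, c ∉ s) →
    (avWins n t C A ↔ avWins (n + 1) (!t) (insert c C) A) := by
  intro n
  induction n using Nat.strong_induction_on with
  | _ n IH =>
  intro C A c t hC hcC hcA
  have hins : insert c C ≠ ∅ := Finset.insert_ne_empty _ _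
  match n, hC with
  | 0, hC =>
    obtain rfl : C = ∅ := Finset.card_eq_zero.mp hC
    cases t with
    | false =>
      simp only [avWins, Bool.not_false]
      rw [if_neg hins, if_pos trivial]
      constructor
      · intro h
        exact ⟨c, Finset.mem_insert_self c ∅, by simp [h]⟩
      · rintro ⟨d, hd, h⟩
        exact Finset.image_eq_empty.mp h
    | true =>
      simp only [avWins, Bool.not_true]
      rw [if_neg hins, if_neg (by simp)]
      constructor
      · intro h d hd
        simp [h]
      · intro h
        have := h c (Finset.mem_insert_self c ∅)
        rwa [filter_notMem_of_forall A c hcA] at this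
  | (m + 1), hC =>
    have hCne : C ≠ ∅ := by
      intro h; rw [h] at hC; simp at hC
    have hcard_erase : ∀ d ∈ C, (C.erase d).card = m := by
      intro d hd
      rw [Finset.card_erase_of_mem hd, hC]
      omega
    have hcA_img : ∀ (d : α), ∀ s ∈ (A.image fun s => s.erase d), c ∉ s := by
      intro d s hs
      obtain ⟨u, hu, rfl⟩ := Finset.mem_image.mp hs
      exact fun hmem => hcA u hu (Finset.mem_of_mem_erase hmem)
    have hcA_fil : ∀ (d : α), ∀ s ∈ (A.filter fun s => d ∉ s), c ∉ s := by
      intro d s hs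
      exact hcA s (Finset.mem_of_mem_filter s hs)
    cases t with
    | false =>
      rw [Bool.not_false, avWins_succ_true (m + 1) (insert c C) A hins]
      constructor
      · intro h
        refine ⟨c, Finset.mem_insert_self c C, ?_⟩
        rwa [Finset.erase_insert hcC, image_erase_of_forall_notMem A c hcA]
      · rintro ⟨d, hd, hW⟩
        rcases Finset.mem_insert.mp hd with rfl | hdC
        · rwa [Finset.erase_insert hcC, image_erase_of_forall_notMem A d hcA] at hW
        · have hcd : c ≠ d := fun h => hcC (h ▸ hdC)
          rw [Finset.erase_insert_of_ne hcd] at hW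
          rw [avWins_succ_false m C A hCne]
          intro e he
          rcases eq_or_ne e d with rfl | hed
          · -- e = d: use the enforcer reply at c in the dummy game
            rw [avWins_succ_false m (insert c (C.erase e)) _
              (Finset.insert_ne_empty _ _)] at hW
            have h1 := hW c (Finset.mem_insert_self _ _)
            rw [Finset.erase_insert (fun h => hcC (Finset.mem_of_mem_erase h)),
              filter_notMem_of_forall _ c (hcA_img e)] at h1
            exact avWins_mono m true (C.erase e) _ _ (filter_subset_image_erase A e) h1
          · -- e ≠ d
            have hdCe : d ∈ C.erase e := Finset.mem_erase.mpr ⟨hed.symm, hdC⟩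
            have hCene : (C.erase e) ≠ ∅ := fun h => by simp [h] at hdCe
            obtain ⟨k, rfl⟩ : ∃ k, m = k + 1 := by
              rcases m with _ | k
              · exfalso
                have := hcard_erase e he
                rw [Finset.card_eq_zero] at this
                rw [this] at hdCe
                simp at hdCe
              · exact ⟨k, rfl⟩
            rw [avWins_succ_true k (C.erase e) _ hCene]
            refine ⟨d, hdCe, ?_⟩
            rw [avWins_succ_false (k + 1) (insert c (C.erase d)) _
              (Finset.insert_ne_empty _ _)] at hW
            have heCd : e ∈ (C.erase d) := Finset.mem_erase.mpr ⟨hed, he⟩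
            have h1 := hW e (Finset.mem_insert_of_mem heCd)
            have hce : c ≠ e := fun h => hcC (h ▸ he)
            rw [Finset.erase_insert_of_ne hce] at h1
            have hkey := IH k (by omega) ((C.erase d).erase e)
              ((A.image fun s => s.erase d).filter fun s => e ∉ s) c false
              (by rw [Finset.card_erase_of_mem heCd, hcard_erase d hdC]; omega)
              (fun h => hcC (Finset.mem_of_mem_erase (Finset.mem_of_mem_erase h)))
              (fun s hs => hcA_img d s (Finset.mem_of_mem_filter s hs))
            rw [Bool.not_false] at hkey
            have h2 := hkey.mpr h1
            rw [Finset.erase_right_comm, filter_image_comm A d e hed]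
            exact h2
    | true =>
      rw [Bool.not_true, avWins_succ_false (m + 1) (insert c C) A hins]
      constructor
      · intro h
        rw [avWins_succ_true m C A hCne] at h
        obtain ⟨d, hdC, hW⟩ := h
        intro e he
        rcases Finset.mem_insert.mp he with rfl | heC
        · rw [Finset.erase_insert hcC, filter_notMem_of_forall A e hcA]
          rw [avWins_succ_true m C A hCne]
          exact ⟨d, hdC, hW⟩
        · have hce : c ≠ e := fun h => hcC (h ▸ heC)
          rw [Finset.erase_insert_of_ne hce]
          rcases eq_or_ne e d with rfl | hed
          · -- e = d
            have hkey := IH m (by omega) (C.erase e) (A.filter fun s => e ∉ s) c false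
              (hcard_erase e heC)
              (fun h => hcC (Finset.mem_of_mem_erase h))
              (hcA_fil e)
            rw [Bool.not_false] at hkey
            exact hkey.mp (avWins_mono m false (C.erase e) _ _
              (filter_subset_image_erase A e) hW)
          · -- e ≠ d
            have hdCe : d ∈ C.erase e := Finset.mem_erase.mpr ⟨hed.symm, hdC⟩
            obtain ⟨k, rfl⟩ : ∃ k, m = k + 1 := by
              rcases m with _ | k
              · exfalso
                have := hcard_erase e heC
                rw [Finset.card_eq_zero] at this
                rw [this] at hdCe
                simp at hdCe
              · exact ⟨k, rfl⟩
            rw [avWins_succ_true (k + 1) (insert c (C.erase e)) _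
              (Finset.insert_ne_empty _ _)]
            have hcd : c ≠ d := fun h => hcC (h ▸ hdC)
            refine ⟨d, Finset.mem_insert_of_mem hdCe, ?_⟩
            rw [Finset.erase_insert_of_ne hcd]
            have heCd : e ∈ C.erase d := Finset.mem_erase.mpr ⟨hed, heC⟩
            have hCdne : (C.erase d) ≠ ∅ := fun h => by simp [h] at heCd
            rw [avWins_succ_false k (C.erase d) _ hCdne] at hW
            have h1 := hW e heCd
            have hkey := IH k (by omega) ((C.erase d).erase e)
              ((A.image fun s => s.erase d).filter fun s => e ∉ s) c true
              (by rw [Finset.card_erase_of_mem heCd, hcard_erase d hdC]; omega)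
              (fun h => hcC (Finset.mem_of_mem_erase (Finset.mem_of_mem_erase h)))
              (fun s hs => hcA_img d s (Finset.mem_of_mem_filter s hs))
            rw [Bool.not_true] at hkey
            have h2 := hkey.mp h1
            rw [Finset.erase_right_comm, filter_image_comm A d e hed]
            exact h2
      · intro h
        have h1 := h c (Finset.mem_insert_self c C)
        rwa [Finset.erase_insert hcC, filter_notMem_of_forall A c hcA] at h1

end AvoiderEnforcerAux

/-- parity normalization, enforcer-first: adding a fresh cell
`c` belonging to no avoider set, the avoider wins `(C, A)` with the enforcer
to move iff the avoider wins `(C ∪ {c}, A)` moving first. -/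
theorem avoider_enforcer_add_dummy_cell
    {α : Type} [DecidableEq α] (C : Finset α) (A : Finset (Finset α))
    (c : α) (hc : c ∉ C) (hcA : ∀ s ∈ A, c ∉ s) :
    AvoiderWins false C A ↔ AvoiderWins true (insert c C) A := by
  unfold AvoiderWins
  rw [Finset.card_insert_of_notMem hc]
  exact avWins_dummy C.card C A c false rfl hc hcA
end

section
/- (Parity normalization, odd case) Let (C, A) be an avoider-enforcer position with |C| odd and the avoider to move. Form the position (C ∪ {c'}, A ∪ {{c'}}) for a fresh cell c', with the avoider to move. Then the avoider wins (C, A) moving first if and only if the avoider wins (C ∪ {c'}, A ∪ {{c'}}) moving first, and the new position has an even number of cells. -/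
namespace AEAux
variable {α : Type} [DecidableEq α]

lemma avWins_zero (t : Bool) (C : Finset α) (A : Finset (Finset α)) :
    avWins 0 t C A ↔ A = ∅ := by rw [avWins]

lemma avWins_true_iff (n : ℕ) (C : Finset α) (A : Finset (Finset α)) (h : C ≠ ∅) :
    avWins (n+1) true C A ↔
      ∃ c ∈ C, avWins n false (C.erase c) (A.image fun s => s.erase c) := by
  rw [avWins]; simp [h]

lemma avWins_false_iff (n : ℕ) (C : Finset α) (A : Finset (Finset α)) (h : C ≠ ∅) :
    avWins (n+1) false C A ↔
      ∀ c ∈ C, avWins n true (C.erase c) (A.filter fun s => c ∉ s) := by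
  rw [avWins]; simp [h]

lemma not_avWins_of_empty_mem :
    ∀ (n : ℕ) (t : Bool) (C : Finset α) (A : Finset (Finset α)), ∅ ∈ A → ¬ avWins n t C A := by
  intro n
  induction n with
  | zero => intro t C A h hw
            rw [avWins_zero] at hw; simp [hw] at h
  | succ m ih =>
      intro t C A h hw
      rcases eq_or_ne C ∅ with rfl | hC
      · rw [avWins] at hw; simp at hw; simp [hw] at h
      · cases t
        · rw [avWins_false_iff _ _ _ hC] at hw
          obtain ⟨c, hc⟩ := Finset.nonempty_of_ne_empty hC
          exact ih _ _ _ (Finset.mem_filter.2 ⟨h, Finset.notMem_empty c⟩) (hw c hc)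
        · rw [avWins_true_iff _ _ _ hC] at hw
          obtain ⟨c, hc, hw⟩ := hw
          exact ih _ _ _ (Finset.mem_image.2 ⟨∅, h, Finset.erase_empty c⟩) hw

lemma image_erase_filter (A : Finset (Finset α)) {e f : α} (hfe : f ≠ e) :
    ((A.image fun s => s.erase e).filter fun s => f ∉ s)
      = ((A.filter fun s => f ∉ s).image fun s => s.erase e) := by
  ext t
  simp only [Finset.mem_filter, Finset.mem_image]
  constructor
  · rintro ⟨⟨s, hs, rfl⟩, hf⟩
    exact ⟨s, ⟨hs, fun h => hf (Finset.mem_erase.2 ⟨hfe, h⟩)⟩, rfl⟩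
  · rintro ⟨s, ⟨hs, hf⟩, rfl⟩
    exact ⟨⟨s, hs, rfl⟩, fun h => hf (Finset.mem_of_mem_erase h)⟩


lemma tempo : ∀ n : ℕ,
    (∀ (C : Finset α) (A : Finset (Finset α)) (f : α), f ∈ C → C.card = n → Odd n →
      avWins (n-1) false (C.erase f) (A.filter fun s => f ∉ s) → avWins n false C A) ∧
    (∀ (C : Finset α) (A : Finset (Finset α)) (f : α), f ∈ C → C.card = n → Even n →
      avWins (n-1) true (C.erase f) (A.filter fun s => f ∉ s) → avWins n true C A) ∧
    (∀ (C : Finset α) (A : Finset (Finset α)), C.card = n → Even n →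
      avWins n false C A → avWins n true C A) := by
  intro n
  induction n using Nat.strong_induction_on with
  | _ n IH =>
  match n with
  | 0 =>
      refine ⟨?_, ?_, ?_⟩
      · intro C A f hf hcard hodd _; simp at hodd
      · intro C A f hf hcard _ _
        rw [Finset.card_eq_zero] at hcard; subst hcard; simp at hf
      · intro C A hcard _ hw
        rw [avWins_zero] at hw ⊢; exact hw
  | m + 1 =>
      have hCne : ∀ (C : Finset α), C.card = m + 1 → C ≠ ∅ := by
        intro C hcard h; rw [h] at hcard; simp at hcard
      have Ffalse : ∀ (C : Finset α) (A : Finset (Finset α)) (f : α),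
          f ∈ C → C.card = m + 1 → Odd (m + 1) →
          avWins m false (C.erase f) (A.filter fun s => f ∉ s) →
          avWins (m+1) false C A := by
        intro C A f hf hcard hodd H
        have hevenm : Even m := by rcases hodd with ⟨k, hk⟩; exact ⟨k, by omega⟩
        rw [avWins_false_iff _ _ _ (hCne C hcard)]
        intro d hd
        by_cases hdf : d = f
        · subst hdf
          exact (IH m (Nat.lt_succ_self m)).2.2 _ _
            (by rw [Finset.card_erase_of_mem hf, hcard]; omega) hevenm H
        · -- d ≠ f : feed d to the imaginary game
          rcases Nat.eq_zero_or_pos m with rfl | hm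
          · exact absurd hcard (by
              have : 1 < C.card := Finset.one_lt_card.mpr ⟨f, hf, d, hd, Ne.symm hdf⟩
              omega)
          obtain ⟨k, rfl⟩ := Nat.exists_eq_succ_of_ne_zero hm.ne'
          have hde : d ∈ C.erase f := Finset.mem_erase.2 ⟨hdf, hd⟩
          rw [avWins_false_iff _ _ _ (by
            intro h; rw [h] at hde; simp at hde)] at H
          have H2 := H d hde
          rw [Finset.erase_right_comm, Finset.filter_comm] at H2
          exact (IH (k+1) (Nat.lt_succ_self _)).2.1 (C.erase d) _ f
            (Finset.mem_erase.2 ⟨Ne.symm hdf, hf⟩)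
            (by rw [Finset.card_erase_of_mem hd, hcard]; omega) hevenm H2
      have Ftrue : ∀ (C : Finset α) (A : Finset (Finset α)) (f : α),
          f ∈ C → C.card = m + 1 → Even (m + 1) →
          avWins m true (C.erase f) (A.filter fun s => f ∉ s) →
          avWins (m+1) true C A := by
        intro C A f hf hcard heven H
        have hoddm : Odd m := by rcases heven with ⟨k, hk⟩; exact ⟨k - 1, by omega⟩
        obtain ⟨k, rfl⟩ := Nat.exists_eq_succ_of_ne_zero
          (by rcases hoddm with ⟨j, hj⟩; omega : m ≠ 0)
        have hef : C.erase f ≠ ∅ := by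
          intro h
          have := Finset.card_erase_of_mem hf
          rw [h, hcard] at this; simp at this
        rw [avWins_true_iff _ _ _ hef] at H
        obtain ⟨e, he, Hw⟩ := H
        have hef' : e ≠ f := (Finset.mem_erase.1 he).1
        rw [avWins_true_iff _ _ _ (hCne C hcard)]
        refine ⟨e, Finset.mem_of_mem_erase he, ?_⟩
        rw [Finset.erase_right_comm, ← image_erase_filter A (Ne.symm hef')] at Hw
        exact (IH (k+1) (Nat.lt_succ_self _)).1 (C.erase e) _ f
          (Finset.mem_erase.2 ⟨Ne.symm hef', hf⟩)
          (by rw [Finset.card_erase_of_mem (Finset.mem_of_mem_erase he), hcard]; omega) hoddm Hw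
      refine ⟨Ffalse, Ftrue, ?_⟩
      intro C A hcard heven hw
      obtain ⟨f, hf⟩ := Finset.nonempty_of_ne_empty (hCne C hcard)
      rw [avWins_false_iff _ _ _ (hCne C hcard)] at hw
      exact Ftrue C A f hf hcard heven (hw f hf)

lemma addcell : ∀ n : ℕ, ∀ (C : Finset α) (A : Finset (Finset α)) (c' : α),
    c' ∉ C → (∀ s ∈ A, c' ∉ s) → C.card = n →
    ((Odd n → (avWins n true C A ↔ avWins (n+1) true (insert c' C) (insert {c'} A))) ∧
     (Even n → (avWins n false C A ↔ avWins (n+1) false (insert c' C) (insert {c'} A)))) := by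
  intro n
  induction n using Nat.strong_induction_on with
  | _ n IH =>
  intro C A c' hc hcA hcard
  have hfilterA : ∀ (B : Finset (Finset α)), (∀ s ∈ B, c' ∉ s) →
      (insert {c'} B).filter (fun s => c' ∉ s) = B := by
    intro B hB
    rw [Finset.filter_insert]
    simp only [Finset.mem_singleton, not_true, if_neg (by simp : ¬ c' ∉ ({c'} : Finset α))]
    exact Finset.filter_true_of_mem hB
  match n with
  | 0 =>
      rw [Finset.card_eq_zero] at hcard; subst hcard
      refine ⟨fun h => by simp at h, fun _ => ?_⟩
      rw [avWins_zero, avWins_false_iff 0 _ _ (by simp)]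
      constructor
      · rintro rfl
        intro c hcm
        rw [Finset.mem_insert] at hcm
        simp only [Finset.notMem_empty, or_false] at hcm
        subst hcm
        rw [avWins_zero, hfilterA ∅ (by simp)]
      · intro h
        have := h c' (Finset.mem_insert_self _ _)
        rwa [avWins_zero, hfilterA A hcA] at this
  | m + 1 =>
      have hCne : C ≠ ∅ := by intro h; rw [h] at hcard; simp at hcard
      have hC'ne : insert c' C ≠ ∅ := Finset.insert_ne_empty _ _
      constructor
      · -- avoider to move, Odd (m+1)
        intro hodd
        have hEm : Even m := by rcases hodd with ⟨k, hk⟩; exact ⟨k, by omega⟩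
        rw [avWins_true_iff m C A hCne, avWins_true_iff (m+1) _ _ hC'ne]
        constructor
        · rintro ⟨c, hcC, hw⟩
          have hcc' : c' ≠ c := fun h => hc (h ▸ hcC)
          refine ⟨c, Finset.mem_insert_of_mem hcC, ?_⟩
          rw [Finset.erase_insert_of_ne hcc', Finset.image_insert,
            show ({c'} : Finset α).erase c = {c'} from
              Finset.erase_eq_of_notMem (by simp [Ne.symm hcc'])]
          exact ((IH m (Nat.lt_succ_self m) (C.erase c) (A.image fun s => s.erase c) c'
            (fun h => hc (Finset.mem_of_mem_erase h))
            (fun s hs => by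
              obtain ⟨t, ht, rfl⟩ := Finset.mem_image.1 hs
              exact fun h => hcA t ht (Finset.mem_of_mem_erase h))
            (by rw [Finset.card_erase_of_mem hcC, hcard]; omega)).2 hEm).mp hw
        · rintro ⟨c, hcI, hw⟩
          rcases Finset.mem_insert.1 hcI with rfl | hcC
          · exfalso
            exact not_avWins_of_empty_mem _ _ _ _
              (Finset.mem_image.2 ⟨{c}, Finset.mem_insert_self _ _, Finset.erase_singleton c⟩) hw
          · have hcc' : c' ≠ c := fun h => hc (h ▸ hcC)
            refine ⟨c, hcC, ?_⟩
            rw [Finset.erase_insert_of_ne hcc', Finset.image_insert,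
              show ({c'} : Finset α).erase c = {c'} from
                Finset.erase_eq_of_notMem (by simp [Ne.symm hcc'])] at hw
            exact ((IH m (Nat.lt_succ_self m) (C.erase c) (A.image fun s => s.erase c) c'
              (fun h => hc (Finset.mem_of_mem_erase h))
              (fun s hs => by
                obtain ⟨t, ht, rfl⟩ := Finset.mem_image.1 hs
                exact fun h => hcA t ht (Finset.mem_of_mem_erase h))
              (by rw [Finset.card_erase_of_mem hcC, hcard]; omega)).2 hEm).mpr hw
      · -- enforcer to move, Even (m+1)
        intro heven
        have hOm : Odd m := by rcases heven with ⟨k, hk⟩; exact ⟨k - 1, by omega⟩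
        have key : ∀ c ∈ C, c' ≠ c → ∀ hw : True,
            ((insert {c'} A).filter fun s => c ∉ s) = insert {c'} (A.filter fun s => c ∉ s) := by
          intro c _ hcc' _
          rw [Finset.filter_insert, if_pos (by simp [Ne.symm hcc'])]
        have IHc : ∀ c ∈ C,
            (avWins m true (C.erase c) (A.filter fun s => c ∉ s) ↔
             avWins (m+1) true (insert c' (C.erase c)) (insert {c'} (A.filter fun s => c ∉ s))) := by
          intro c hcC
          exact (IH m (Nat.lt_succ_self m) (C.erase c) (A.filter fun s => c ∉ s) c'
            (fun h => hc (Finset.mem_of_mem_erase h))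
            (fun s hs => hcA s (Finset.mem_filter.1 hs).1)
            (by rw [Finset.card_erase_of_mem hcC, hcard]; omega)).1 hOm
        rw [avWins_false_iff m C A hCne, avWins_false_iff (m+1) _ _ hC'ne]
        constructor
        · intro hL c hcI
          rcases Finset.mem_insert.1 hcI with rfl | hcC
          · rw [Finset.erase_insert hc, hfilterA A hcA]
            exact (tempo (m+1)).2.2 C A hcard heven ((avWins_false_iff m C A hCne).mpr hL)
          · have hcc' : c' ≠ c := fun h => hc (h ▸ hcC)
            rw [Finset.erase_insert_of_ne hcc', key c hcC hcc' trivial]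
            exact (IHc c hcC).mp (hL c hcC)
        · intro hR c hcC
          have hcc' : c' ≠ c := fun h => hc (h ▸ hcC)
          have := hR c (Finset.mem_insert_of_mem hcC)
          rw [Finset.erase_insert_of_ne hcc', key c hcC hcc' trivial] at this
          exact (IHc c hcC).mpr this

end AEAux

/-- parity normalization, odd case: if `|C|` is odd and the
avoider moves first, adding a fresh cell `c'` together with the single new
avoider set `{c'}` yields an equivalent game with an even number of cells. -/
theorem avoider_enforcer_odd_normalization
    {α : Type} [DecidableEq α] (C : Finset α) (A : Finset (Finset α))
    (hodd : Odd C.card) (c' : α) (hc : c' ∉ C) (hcA : ∀ s ∈ A, c' ∉ s) :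
    (AvoiderWins true C A ↔ AvoiderWins true (insert c' C) (insert {c'} A)) ∧
    Even (insert c' C).card := by
  constructor
  · unfold AvoiderWins
    rw [Finset.card_insert_of_notMem hc]
    exact (AEAux.addcell C.card C A c' hc hcA rfl).1 hodd
  · rw [Finset.card_insert_of_notMem hc]
    exact Odd.add_one hodd
end
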